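/- arXiv:2010.08960 — 6 statements merged into one kernel-verified Lean document; each statement's English description precedes it below -/
import Mathlib

section
/- Let C be a category. Then the intersection of any two finitely generated right ideals of C is finitely generated if and only if C is finitely aligned. -/
open CategoryTheory

universe u v

namespace KGraphPaper

/-- The set of all morphisms of a category, encoded as triples
`⟨source, target, hom⟩`.  The "source" of `m` is `m.1` and the "target" is `m.2.1`. -/
abbrev Mor (C : Type u) [Category.{v} C] : Type (max u v) := Σ (x y : C), x ⟶ y

variable {C : Type u} [Category.{v} C]

/-- `Comp a b c` means: the composite `ab` is defined (the source of `a` equals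
the target of `b`) and equals `c`. -/
def Comp (a b c : Mor C) : Prop :=
  ∃ (x y z : C) (f : y ⟶ z) (g : x ⟶ y),
    a = ⟨y, z, f⟩ ∧ b = ⟨x, y, g⟩ ∧ c = ⟨x, z, g ≫ f⟩

/-- The principal right ideal `aC = {ax : x a morphism with ax defined}`. -/
def princ (a : Mor C) : Set (Mor C) := {c | ∃ b, Comp a b c}

/-- `XC = ⋃_{x ∈ X} xC`. -/
def idealOf (X : Set (Mor C)) : Set (Mor C) := ⋃ x ∈ X, princ x

/-- A right ideal: closed under composition on the right. -/
def IsRightIdeal (R : Set (Mor C)) : Prop :=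
  ∀ r ∈ R, ∀ s c : Mor C, Comp r s c → c ∈ R

/-- A finitely generated right ideal: `R = XC` with `X` finite. -/
def FG (R : Set (Mor C)) : Prop := ∃ X : Set (Mor C), X.Finite ∧ R = idealOf X

/-- `m` is an identity morphism. -/
def IsId (m : Mor C) : Prop := ∃ x : C, m = ⟨x, x, 𝟙 x⟩

/-- `C` has only finitely many identities. -/
def FinIds (C : Type u) [Category.{v} C] : Prop := {m : Mor C | IsId m}.Finite

/-- A right ideal `R` is essential if `R ∩ aC ≠ ∅` for every morphism `a`. -/
def Essential (R : Set (Mor C)) : Prop := ∀ a : Mor C, (R ∩ princ a).Nonempty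

/-- `a` and `b` are dependent if `aC ∩ bC ≠ ∅`. -/
def Dependent (a b : Mor C) : Prop := (princ a ∩ princ b).Nonempty

/-- `X` is large in `C`: every morphism is dependent on some element of `X`. -/
def LargeIn (X : Set (Mor C)) : Prop := ∀ a : Mor C, ∃ x ∈ X, Dependent a x

/-- `C` is cancellative: `ab = ab' → b = b'` and `ba = b'a → b = b'`. -/
def Cancellative (C : Type u) [Category.{v} C] : Prop :=
  (∀ a b b' c : Mor C, Comp a b c → Comp a b' c → b = b') ∧
  (∀ a b b' c : Mor C, Comp b a c → Comp b' a c → b = b')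

/-- `C` is conical: the only invertible morphisms are the identities. -/
def Conical (C : Type u) [Category.{v} C] : Prop :=
  ∀ a b : Mor C, (∃ c, Comp a b c ∧ IsId c) → (∃ c, Comp b a c ∧ IsId c) → IsId a

/-- `C` is finitely aligned: each `aC ∩ bC` is a finitely generated right ideal. -/
def FinitelyAligned (C : Type u) [Category.{v} C] : Prop :=
  ∀ a b : Mor C, FG (princ a ∩ princ b)

/-- `θ` is a morphism of right ideals on `R`: whenever `rs` is defined with `r ∈ R`,
`θ(r)s` is defined and `θ(rs) = θ(r)s`. -/
def RIMorOn (R : Set (Mor C)) (θ : Mor C → Mor C) : Prop :=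
  ∀ r ∈ R, ∀ s c : Mor C, Comp r s c → Comp (θ r) s (θ c)

/-- A code: a finite set of pairwise independent morphisms. -/
def Code (U : Set (Mor C)) : Prop :=
  U.Finite ∧ ∀ a ∈ U, ∀ b ∈ U, a ≠ b → ¬ Dependent a b

/-- A maximal code: a code which is large in `C`. -/
def MaximalCode (U : Set (Mor C)) : Prop := Code U ∧ LargeIn U

/-- `C` is strongly finitely aligned: each `aC ∩ bC` is empty or generated by a code. -/
def StronglyFinitelyAligned (C : Type u) [Category.{v} C] : Prop :=
  ∀ a b : Mor C, princ a ∩ princ b = ∅ ∨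
    ∃ S : Set (Mor C), Code S ∧ princ a ∩ princ b = idealOf S

/-- `xy⁻¹ ≤ uv⁻¹` for basic morphisms: `yC ⊆ vC` and `uv⁻¹` agrees with `xy⁻¹` on `yC`. -/
def basicLE (x y u v : Mor C) : Prop :=
  princ y ⊆ princ v ∧
  ∀ z s t w w' : Mor C, Comp y s z → Comp x s w → Comp v t z → Comp u t w' → w = w'

end KGraphPaper

open KGraphPaper

lemma princ_eq_idealOf_singleton {C : Type u} [Category.{v} C] (a : Mor C) :
    princ a = idealOf {a} := by
  simp [idealOf]

lemma fg_princ {C : Type u} [Category.{v} C] (a : Mor C) : FG (princ a) :=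
  ⟨{a}, Set.finite_singleton a, princ_eq_idealOf_singleton a⟩

/-- the intersection of any two finitely generated right ideals of `C`
is finitely generated iff `C` is finitely aligned. -/
theorem stmt_1 (C : Type u) [Category.{v} C] :
    (∀ R₁ R₂ : Set (Mor C), FG R₁ → FG R₂ → FG (R₁ ∩ R₂)) ↔ FinitelyAligned C := by
  constructor
  · intro h a b
    exact h _ _ (fg_princ a) (fg_princ b)
  · rintro h R₁ R₂ ⟨X, hX, rfl⟩ ⟨Y, hY, rfl⟩
    choose S hfin heq using h
    refine ⟨⋃ x ∈ X, ⋃ y ∈ Y, S x y,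
      hX.biUnion fun x _ => hY.biUnion fun y _ => hfin x y, ?_⟩
    ext m
    simp only [idealOf, Set.mem_inter_iff, Set.mem_iUnion]
    constructor
    · rintro ⟨⟨x, hx, hmx⟩, ⟨y, hy, hmy⟩⟩
      have : m ∈ idealOf (S x y) := by
        rw [← heq x y]; exact ⟨hmx, hmy⟩
      obtain ⟨z, hz, hmz⟩ := Set.mem_iUnion₂.mp this
      exact ⟨z, ⟨x, hx, y, hy, hz⟩, hmz⟩
    · rintro ⟨z, ⟨x, hx, y, hy, hz''⟩, hmz⟩
      have : m ∈ princ x ∩ princ y := by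
        rw [heq x y]; exact Set.mem_iUnion₂.mpr ⟨z, hz'', hmz⟩
      exact ⟨⟨x, hx, this.1⟩, ⟨y, hy, this.2⟩⟩
end

section
/- Let C be a finitely aligned conical cancellative category with finitely many identities. Let α : XC → YC be a bijective morphism of right ideals between finitely generated essential right ideals of C, and suppose there is a finitely generated essential right ideal ZC with ZC ⊆ XC such that α(z) = z for all z ∈ ZC. Then α(w) = w for every w ∈ XC. (Equivalently: the inverse monoid of bijective morphisms between finitely generated essential right ideals of C is E-unitary: every element above an idempotent is an idempotent.) -/
open CategoryTheory

universe u v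

open KGraphPaper

/-- if a bijective morphism `α : XC → YC` between finitely generated
essential right ideals restricts to the identity on a finitely generated essential
right ideal `ZC ⊆ XC`, then `α` is the identity on all of `XC`
(E-unitarity of the inverse monoid of such bijective morphisms). -/
theorem stmt_5 (C : Type u) [Category.{v} C] (hFA : FinitelyAligned C) (hCon : Conical C)
    (hCan : Cancellative C) (hFin : FinIds C)
    (X Y Z : Set (Mor C)) (hX : X.Finite) (hY : Y.Finite) (hZ : Z.Finite)
    (hXe : Essential (idealOf X)) (hYe : Essential (idealOf Y))
    (hZe : Essential (idealOf Z))
    (α : Mor C → Mor C) (hbij : Set.BijOn α (idealOf X) (idealOf Y))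
    (hmor : RIMorOn (idealOf X) α)
    (hsub : idealOf Z ⊆ idealOf X)
    (hfix : ∀ z ∈ idealOf Z, α z = z) :
    ∀ w ∈ idealOf X, α w = w := by
  intro w hw
  obtain ⟨c, hcZ, s, hcomp⟩ := hZe w
  have h1 : Comp (α w) s (α c) := hmor w hw s c hcomp
  rw [hfix c hcZ] at h1
  exact hCan.2 s (α w) w c h1 hcomp
end

section
/- Let C be a finitely aligned conical cancellative category with finitely many identities. Let xy⁻¹ be a basic morphism and let u₁v₁⁻¹, ..., uₙvₙ⁻¹ be basic morphisms such that yC ⊆ v₁C ∪ ... ∪ vₙC and, for every z ∈ yC and every j with z ∈ vⱼC, the value of xy⁻¹ at z equals the value of uⱼvⱼ⁻¹ at z. Then there exist an index j and a morphism p with x = uⱼp and y = vⱼp; in particular xy⁻¹ ≤ uⱼvⱼ⁻¹ for some j. -/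
open CategoryTheory

universe u v

open KGraphPaper

/-- if the basic morphism `xy⁻¹` lies below the join of basic morphisms
`u₁v₁⁻¹, …, uₙvₙ⁻¹` (that is, `yC ⊆ v₁C ∪ … ∪ vₙC` and each `uⱼvⱼ⁻¹` agrees with
`xy⁻¹` wherever both are defined on `yC`), then `xy⁻¹ ≤ uⱼvⱼ⁻¹` for some `j`;
indeed `x = uⱼp` and `y = vⱼp` for some morphism `p`. -/
theorem stmt_8 (C : Type u) [Category.{v} C] (hFA : FinitelyAligned C) (hCon : Conical C)
    (hCan : Cancellative C) (hFin : FinIds C)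
    (x y : Mor C) (hxy : x.1 = y.1) (n : ℕ) (u v : Fin n → Mor C)
    (huv : ∀ j, (u j).1 = (v j).1)
    (hcov : princ y ⊆ ⋃ j, princ (v j))
    (hagree : ∀ j, ∀ z ∈ princ y, ∀ s t w w' : Mor C,
      Comp y s z → Comp x s w → Comp (v j) t z → Comp (u j) t w' → w = w') :
    ∃ j, (∃ p : Mor C, Comp (u j) p x ∧ Comp (v j) p y) ∧ basicLE x y (u j) (v j) := by

  have hy : y ∈ princ y :=
    ⟨⟨y.1, y.1, 𝟙 y.1⟩, y.1, y.1, y.2.1, y.2.2, 𝟙 y.1, rfl, rfl, by simp⟩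
  obtain ⟨j, p, hp⟩ := Set.mem_iUnion.mp (hcov hy)
  obtain ⟨a, b, c, f, g, hvj, hpeq, hyeq⟩ := hp
  rcases hux : x with ⟨xa, xc, xf⟩
  subst hux
  rcases huj : u j with ⟨ub, uc, uf⟩
  have hxa : xa = a := by rw [hyeq] at hxy; exact hxy
  subst hxa
  have hub : ub = b := by
    have := huv j
    rw [huj, hvj] at this
    exact this
  subst hub
  have hcompu : Comp (u j) p ⟨xa, uc, g ≫ uf⟩ :=
    ⟨xa, ub, uc, uf, g, huj, hpeq, rfl⟩
  have hcompv : Comp (v j) p y := ⟨xa, ub, c, f, g, hvj, hpeq, hyeq⟩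
  have hys : Comp y (⟨xa, xa, 𝟙 xa⟩ : Mor C) y :=
    ⟨xa, xa, c, g ≫ f, 𝟙 xa, hyeq, rfl, by rw [hyeq]; simp⟩
  have hxs : Comp (⟨xa, xc, xf⟩ : Mor C) (⟨xa, xa, 𝟙 xa⟩ : Mor C) ⟨xa, xc, xf⟩ :=
    ⟨xa, xa, xc, xf, 𝟙 xa, rfl, rfl, by simp⟩
  have hxval : (⟨xa, xc, xf⟩ : Mor C) = ⟨xa, uc, g ≫ uf⟩ :=
    hagree j y hy ⟨xa, xa, 𝟙 xa⟩ p ⟨xa, xc, xf⟩ ⟨xa, uc, g ≫ uf⟩ hys hxs hcompv hcompu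
  refine ⟨j, ⟨p, by rw [hxval]; exact hcompu, hcompv⟩, ?_, ?_⟩
  · rintro z ⟨s, sa, sb, sc, sf, sg, hy2, hs2, hz2⟩
    rw [hyeq] at hy2
    obtain ⟨rfl, hy3⟩ := Sigma.mk.inj_iff.mp hy2
    obtain ⟨rfl, hy4⟩ := Sigma.mk.inj_iff.mp hy3.eq
    have hf : sf = g ≫ f := hy4.eq.symm
    subst hf
    exact ⟨⟨sa, ub, sg ≫ g⟩, sa, ub, _, f, sg ≫ g, hvj, rfl, by rw [hz2]; simp⟩
  · intro z s t w w' h1 h2 h3 h4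
    exact hagree j z ⟨s, h1⟩ s t w w' h1 h2 h3 h4
end

section
/- Let C be a strongly finitely aligned conical cancellative category with finitely many identities. Let X and Y be codes, and for each pair (x, y) ∈ X × Y with xC ∩ yC ≠ ∅ let S(x,y) be a code with xC ∩ yC = S(x,y)C. Then XC ∩ YC is either empty or equals ZC, where Z = ⋃_{(x,y)} S(x,y), and Z is a code. In particular, the intersection of two right ideals generated by codes is either empty or generated by a code. -/
open CategoryTheory

universe u v

namespace KGraphPaper

variable {C : Type u} [Category.{v} C]

section Aux

variable {C : Type u} [Category.{v} C]

lemma self_mem_princ (a : Mor C) : a ∈ princ a := by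
  obtain ⟨x, y, f⟩ := a
  exact ⟨⟨x, x, 𝟙 x⟩, x, x, y, f, 𝟙 x, rfl, rfl, by simp⟩

lemma princ_subset_of_mem {a b : Mor C} (h : b ∈ princ a) : princ b ⊆ princ a := by
  obtain ⟨s, x, y, z, f, g, ha, hs, hb⟩ := h
  rintro c ⟨t, x', y', z', f', g', hb', ht, hc⟩
  subst ha hs hc ht
  rw [hb] at hb'
  rw [Sigma.mk.inj_iff] at hb'
  obtain ⟨rfl, h2⟩ := hb'
  rw [heq_eq_eq, Sigma.mk.inj_iff] at h2
  obtain ⟨rfl, hfg⟩ := h2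
  have hfg' : g ≫ f = f' := eq_of_heq hfg
  subst hfg'
  exact ⟨⟨x', y, g' ≫ g⟩, x', y, z, f, g' ≫ g, rfl, rfl, by simp⟩

lemma mem_idealOf_iff {X : Set (Mor C)} {c : Mor C} :
    c ∈ idealOf X ↔ ∃ x ∈ X, c ∈ princ x := by
  simp [idealOf]

end Aux

end KGraphPaper

open KGraphPaper

/-- in a strongly finitely aligned conical cancellative category with
finitely many identities, if `X`, `Y` are codes and `S(x,y)` is a code generating
`xC ∩ yC` for each pair with `xC ∩ yC ≠ ∅`, then `XC ∩ YC = ZC` where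
`Z = ⋃ S(x,y)`, and `Z` is a code. -/
theorem stmt_10 (C : Type u) [Category.{v} C] (hSFA : StronglyFinitelyAligned C)
    (hCon : Conical C) (hCan : Cancellative C) (hFin : FinIds C)
    (X Y : Set (Mor C)) (hX : Code X) (hY : Code Y)
    (S : Mor C → Mor C → Set (Mor C))
    (hS : ∀ x ∈ X, ∀ y ∈ Y, (princ x ∩ princ y).Nonempty →
      Code (S x y) ∧ princ x ∩ princ y = idealOf (S x y)) :
    idealOf X ∩ idealOf Y =
      idealOf (⋃ x ∈ X, ⋃ y ∈ Y, ⋃ (_ : (princ x ∩ princ y).Nonempty), S x y) ∧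
    Code (⋃ x ∈ X, ⋃ y ∈ Y, ⋃ (_ : (princ x ∩ princ y).Nonempty), S x y) := by
  set Z := (⋃ x ∈ X, ⋃ y ∈ Y, ⋃ (_ : (princ x ∩ princ y).Nonempty), S x y) with hZ
  have hmemZ : ∀ z, z ∈ Z ↔ ∃ x ∈ X, ∃ y ∈ Y, (princ x ∩ princ y).Nonempty ∧ z ∈ S x y := by
    intro z; simp only [hZ, Set.mem_iUnion]; tauto
  have hsub : ∀ x ∈ X, ∀ y ∈ Y, ∀ hne : (princ x ∩ princ y).Nonempty,
      ∀ z ∈ S x y, princ z ⊆ princ x ∩ princ y := by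
    intro x hx y hy hne z hz
    have h2 := (hS x hx y hy hne).2
    have : z ∈ princ x ∩ princ y := by
      rw [h2, mem_idealOf_iff]; exact ⟨z, hz, self_mem_princ z⟩
    exact fun c hc => ⟨princ_subset_of_mem this.1 hc, princ_subset_of_mem this.2 hc⟩
  constructor
  · ext c
    constructor
    · rintro ⟨hcX, hcY⟩
      obtain ⟨x, hx, hcx⟩ := mem_idealOf_iff.mp hcX
      obtain ⟨y, hy, hcy⟩ := mem_idealOf_iff.mp hcY
      have hne : (princ x ∩ princ y).Nonempty := ⟨c, hcx, hcy⟩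
      have h2 := (hS x hx y hy hne).2
      have : c ∈ idealOf (S x y) := by rw [← h2]; exact ⟨hcx, hcy⟩
      obtain ⟨z, hz, hcz⟩ := mem_idealOf_iff.mp this
      exact mem_idealOf_iff.mpr ⟨z, (hmemZ z).mpr ⟨x, hx, y, hy, hne, hz⟩, hcz⟩
    · intro hc
      obtain ⟨z, hzZ, hcz⟩ := mem_idealOf_iff.mp hc
      obtain ⟨x, hx, y, hy, hne, hz⟩ := (hmemZ z).mp hzZ
      have := hsub x hx y hy hne z hz hcz
      exact ⟨mem_idealOf_iff.mpr ⟨x, hx, this.1⟩, mem_idealOf_iff.mpr ⟨y, hy, this.2⟩⟩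
  · constructor
    · apply Set.Finite.biUnion hX.1
      intro x hx
      apply Set.Finite.biUnion hY.1
      intro y hy
      by_cases hne : (princ x ∩ princ y).Nonempty
      · simpa [hne] using (hS x hx y hy hne).1.1
      · simp [hne]
    · intro a ha b hb hab hdep
      obtain ⟨x, hx, y, hy, hne, haS⟩ := (hmemZ a).mp ha
      obtain ⟨x', hx', y', hy', hne', hbS⟩ := (hmemZ b).mp hb
      obtain ⟨c, hca, hcb⟩ := hdep
      have hca' := hsub x hx y hy hne a haS hca
      have hcb' := hsub x' hx' y' hy' hne' b hbS hcb
      have hxx : x = x' := by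
        by_contra h
        exact hX.2 x hx x' hx' h ⟨c, hca'.1, hcb'.1⟩
      have hyy : y = y' := by
        by_contra h
        exact hY.2 y hy y' hy' h ⟨c, hca'.2, hcb'.2⟩
      subst hxx; subst hyy
      exact (hS x hx y hy hne).1.2 a haS b hbS hab ⟨c, hca, hcb⟩
end

section
/- Let C be a k-graph and let a, b, c be morphisms of C with c ∈ aC ∩ bC. Then there exists a morphism e of C with d(e) = d(a) ⊔ d(b) (the componentwise maximum in ℕ^k) such that c ∈ eC and e ∈ aC ∩ bC; in particular cC ⊆ eC ⊆ aC ∩ bC. -/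
open CategoryTheory

universe u v

namespace KGraphPaper

variable {C : Type u} [Category.{v} C]

/-- `d` makes the countable category `C` into a `k`-graph: the degree map is a
functor to `ℕ^k` satisfying the unique factorisation property. -/
def IsKGraph {k : ℕ} (d : Mor C → (Fin k → ℕ)) : Prop :=
  Countable (Mor C) ∧
  (∀ m : Mor C, IsId m → d m = 0) ∧
  (∀ a b c : Mor C, Comp a b c → d c = d a + d b) ∧
  (∀ (a : Mor C) (m n : Fin k → ℕ), d a = m + n →
    ∃ a₁ a₂ : Mor C, (Comp a₁ a₂ a ∧ d a₁ = m ∧ d a₂ = n) ∧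
      ∀ b₁ b₂ : Mor C, Comp b₁ b₂ a → d b₁ = m → d b₂ = n → b₁ = a₁ ∧ b₂ = a₂)

/-- `C` has no sources: every identity receives a morphism of every degree. -/
def NoSources {k : ℕ} (d : Mor C → (Fin k → ℕ)) : Prop :=
  ∀ (e : C) (m : Fin k → ℕ), ∃ x : Mor C, x.2.1 = e ∧ d x = m

/-- `C` is row finite: finitely many morphisms with a given target and degree. -/
def RowFinite {k : ℕ} (d : Mor C → (Fin k → ℕ)) : Prop :=
  ∀ (e : C) (m : Fin k → ℕ), {x : Mor C | x.2.1 = e ∧ d x = m}.Finite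

end KGraphPaper

open KGraphPaper

namespace KGraphPaper

variable {C : Type u} [Category.{v} C]

lemma comp_assoc' {p q r s t : Mor C} (h1 : Comp p q r) (h2 : Comp r s t) :
    ∃ u : Mor C, Comp q s u ∧ Comp p u t := by
  obtain ⟨x, y, z, f, g, rfl, rfl, rfl⟩ := h1
  obtain ⟨x', y', z', f', g', hr, rfl, rfl⟩ := h2
  obtain ⟨rfl, h⟩ := Sigma.mk.inj_iff.mp hr
  obtain ⟨rfl, h2⟩ := Sigma.mk.inj_iff.mp (eq_of_heq h)
  obtain rfl := eq_of_heq h2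
  exact ⟨⟨x', y, g' ≫ g⟩, ⟨x', x, y, g, g', rfl, rfl, rfl⟩,
    ⟨x', y, z, f, g' ≫ g, rfl, rfl, by simp [Category.assoc]⟩⟩

lemma princ_mono' {e c : Mor C} (h : c ∈ princ e) : princ c ⊆ princ e := by
  obtain ⟨s, hs⟩ := h
  intro w hw
  obtain ⟨t, ht⟩ := hw
  obtain ⟨u, _, hu2⟩ := comp_assoc' hs ht
  exact ⟨u, hu2⟩

end KGraphPaper

/-- in a `k`-graph, if `c ∈ aC ∩ bC` then there is a morphism `e`
of degree `d(a) ⊔ d(b)` with `c ∈ eC` and `e ∈ aC ∩ bC`; in particular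
`cC ⊆ eC ⊆ aC ∩ bC`. -/
theorem stmt_16 (C : Type u) [Category.{v} C] (k : ℕ) (d : Mor C → (Fin k → ℕ))
    (hK : IsKGraph d) (a b c : Mor C) (h : c ∈ princ a ∩ princ b) :
    ∃ e : Mor C, d e = d a ⊔ d b ∧ c ∈ princ e ∧ e ∈ princ a ∩ princ b ∧
      princ c ⊆ princ e ∧ princ e ⊆ princ a ∩ princ b := by
  obtain ⟨⟨x, hx⟩, ⟨y, hy⟩⟩ := h
  obtain ⟨-, -, hdeg, hfact⟩ := hK
  have hdax : d c = d a + d x := hdeg a x c hx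
  have hdby : d c = d b + d y := hdeg b y c hy
  set m : Fin k → ℕ := d a ⊔ d b with hm
  have hmle : ∀ i, m i ≤ d c i := by
    intro i
    have h1 : d c i = d a i + d x i := by rw [hdax]; rfl
    have h2 : d c i = d b i + d y i := by rw [hdby]; rfl
    simp only [hm, Pi.sup_apply, sup_le_iff]
    omega
  have hsplit : d c = m + (d c - m) := by
    funext i
    have := hmle i
    simp only [Pi.add_apply, Pi.sub_apply]
    omega
  obtain ⟨e, f, ⟨hef, hde, hdf⟩, _⟩ := hfact c m (d c - m) hsplit
  have hce : c ∈ princ e := ⟨f, hef⟩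
  -- e ∈ princ a
  have key : ∀ (p : Mor C) (w : Mor C), Comp p w c → d p ≤ m → e ∈ princ p := by
    intro p w hpw hpm
    have hdpc : d c = d p + (d c - d p) := by
      funext i
      have h1 : d c = d p + d w := hdeg p w c hpw
      have : d c i = d p i + d w i := by rw [h1]; rfl
      simp only [Pi.add_apply, Pi.sub_apply]
      omega
    obtain ⟨c1, c2, _, huniq⟩ := hfact c (d p) (d c - d p) hdpc
    -- factor e = e1 e2 with d e1 = d p
    have hesplit : d e = d p + (m - d p) := by
      funext i
      have h5 : d p i ≤ m i := hpm i
      have h7 : d e i = m i := by rw [hde]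
      have h8 : (d p + (m - d p)) i = d p i + (m i - d p i) := rfl
      rw [h7, h8]
      omega
    obtain ⟨e1, e2, ⟨he12, hde1, hde2⟩, _⟩ := hfact e (d p) (m - d p) hesplit
    obtain ⟨g, hg1, hg2⟩ := comp_assoc' he12 hef
    have hdg : d g = d c - d p := by
      have h1 : d g = d e2 + d f := hdeg e2 f g hg1
      funext i
      have h2 : d g i = d e2 i + d f i := by rw [h1]; rfl
      have h3 : d e2 i = m i - d p i := by rw [hde2]; rfl
      have h4 : d f i = d c i - m i := by rw [hdf]; rfl
      have h5 : d p i ≤ m i := hpm i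
      have h6 : m i ≤ d c i := hmle i
      have h9 : (d c - d p) i = d c i - d p i := rfl
      rw [h9, h2, h3, h4]
      omega
    have hdw : d w = d c - d p := by
      have h1 : d c = d p + d w := hdeg p w c hpw
      funext i
      have : d c i = d p i + d w i := by rw [h1]; rfl
      simp only [Pi.sub_apply]
      omega
    have e1p : e1 = c1 ∧ g = c2 := huniq e1 g hg2 hde1 hdg
    have pp : p = c1 ∧ w = c2 := huniq p w hpw rfl hdw
    have : e1 = p := by rw [e1p.1, pp.1]
    subst this
    exact ⟨e2, he12⟩
  have hea : e ∈ princ a := key a x hx (le_sup_left)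
  have heb : e ∈ princ b := key b y hy (le_sup_right)
  exact ⟨e, hde, hce, ⟨hea, heb⟩, princ_mono' hce,
    fun z hz => ⟨princ_mono' hea hz, princ_mono' heb hz⟩⟩
end

section
/- Let S be a Boolean inverse monoid. Then S is fundamental if and only if every non-idempotent element of S lies above an infinitesimal in the natural partial order. -/
namespace KGraphPaper

/-- An inverse monoid with zero: a monoid with zero equipped with an inverse
operation `inv'` satisfying `s (inv' s) s = s` and `(inv' s) s (inv' s) = inv' s`,
in which all idempotents commute. -/
class InvMonZero (S : Type*) extends MonoidWithZero S where
  inv' : S → S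
  mul_inv_mul : ∀ s : S, s * inv' s * s = s
  inv_mul_inv : ∀ s : S, inv' s * s * inv' s = inv' s
  idem_comm : ∀ e f : S, e * e = e → f * f = f → e * f = f * e

namespace InvMonZero

variable {S : Type*} [InvMonZero S]

/-- The natural partial order: `a ≤ b` iff `a = b a⁻¹ a`. -/
def nle (a b : S) : Prop := a = b * inv' a * a

/-- `e` is an idempotent. -/
def IsIdem (e : S) : Prop := e * e = e

/-- `a` and `b` are compatible: `a⁻¹ b` and `a b⁻¹` are both idempotents. -/
def Compatible (a b : S) : Prop := IsIdem (inv' a * b) ∧ IsIdem (a * inv' b)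

/-- `j` is the join of `a` and `b` with respect to the natural partial order. -/
def IsJoin (a b j : S) : Prop :=
  nle a j ∧ nle b j ∧ ∀ c : S, nle a c → nle b c → nle j c

end InvMonZero

open InvMonZero

/-- A Boolean inverse monoid: an inverse monoid with zero in which every pair of
compatible elements has a join with respect to the natural partial order,
multiplication distributes over such joins, and the idempotents (with meet the
product, least element `0`, greatest element `1`) form a Boolean algebra: this
amounts to every idempotent having a complement. -/
class BooleanInverseMonoid (S : Type*) extends InvMonZero S where
  join_compatible : ∀ a b : S, Compatible a b → ∃ j : S, IsJoin a b j
  mul_join_left : ∀ a b j c : S, IsJoin a b j → IsJoin (c * a) (c * b) (c * j)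
  mul_join_right : ∀ a b j c : S, IsJoin a b j → IsJoin (a * c) (b * c) (j * c)
  compl_exists : ∀ e : S, IsIdem e → ∃ f : S, IsIdem f ∧ e * f = 0 ∧ IsJoin e f 1

/-- `S` is fundamental: only idempotents commute with all idempotents. -/
def Fundamental (S : Type*) [InvMonZero S] : Prop :=
  ∀ a : S, (∀ e : S, IsIdem e → a * e = e * a) → IsIdem a

/-- An infinitesimal: a nonzero element squaring to zero. -/
def Infinitesimal {S : Type*} [InvMonZero S] (a : S) : Prop := a ≠ 0 ∧ a * a = 0

end KGraphPaper

open KGraphPaper KGraphPaper.InvMonZero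


section Helpers

variable {S : Type*} [InvMonZero S]

lemma comm_idem {e f : S} (he : IsIdem e) (hf : IsIdem f) : e * f = f * e :=
  InvMonZero.idem_comm e f he hf

lemma isIdem_mul {e f : S} (he : IsIdem e) (hf : IsIdem f) : IsIdem (e * f) := by
  have he' : e * e = e := he
  have hf' : f * f = f := hf
  show e * f * (e * f) = e * f
  calc e * f * (e * f) = e * (f * e) * f := by simp only [mul_assoc]
    _ = e * (e * f) * f := by rw [comm_idem hf he]
    _ = e * e * (f * f) := by simp only [mul_assoc]
    _ = e * f := by rw [he', hf']

lemma invUnique19 {x y : S} (h1 : x * y * x = x) (h2 : y * x * y = y) : inv' x = y := by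
  set z := inv' x with hz
  have hx1 : x * z * x = x := InvMonZero.mul_inv_mul x
  have hx2 : z * x * z = z := InvMonZero.inv_mul_inv x
  have iyx : IsIdem (y * x) := by
    show y * x * (y * x) = y * x
    calc y * x * (y * x) = y * (x * y * x) := by simp only [mul_assoc]
      _ = y * x := by rw [h1]
  have izx : IsIdem (z * x) := by
    show z * x * (z * x) = z * x
    calc z * x * (z * x) = z * (x * z * x) := by simp only [mul_assoc]
      _ = z * x := by rw [hx1]
  have ixy : IsIdem (x * y) := by
    show x * y * (x * y) = x * y
    calc x * y * (x * y) = x * (y * x * y) := by simp only [mul_assoc]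
      _ = x * y := by rw [h2]
  have ixz : IsIdem (x * z) := by
    show x * z * (x * z) = x * z
    calc x * z * (x * z) = x * (z * x * z) := by simp only [mul_assoc]
      _ = x * z := by rw [hx2]
  have hy : y = z * x * y := by
    calc y = y * x * y := h2.symm
      _ = y * (x * z * x) * y := by rw [hx1]
      _ = (y * x) * (z * x) * y := by simp only [mul_assoc]
      _ = (z * x) * (y * x) * y := by rw [comm_idem iyx izx]
      _ = z * x * (y * x * y) := by simp only [mul_assoc]
      _ = z * x * y := by rw [h2]
  have hzz : z = z * x * y := by
    calc z = z * x * z := hx2.symm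
      _ = z * (x * y * x) * z := by rw [h1]
      _ = z * ((x * y) * (x * z)) := by simp only [mul_assoc]
      _ = z * ((x * z) * (x * y)) := by rw [comm_idem ixy ixz]
      _ = (z * x * z) * (x * y) := by simp only [mul_assoc]
      _ = z * (x * y) := by rw [hx2]
      _ = z * x * y := by rw [mul_assoc]
  rw [hzz, ← hy]

lemma invIdem19 {e : S} (he : IsIdem e) : inv' e = e := by
  have he' : e * e = e := he
  exact invUnique19 (by rw [he', he']) (by rw [he', he'])

lemma isIdem_dom (x : S) : IsIdem (inv' x * x) := by
  show inv' x * x * (inv' x * x) = inv' x * x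
  calc inv' x * x * (inv' x * x) = inv' x * (x * inv' x * x) := by simp only [mul_assoc]
    _ = inv' x * x := by rw [InvMonZero.mul_inv_mul]

lemma isIdem_ran (x : S) : IsIdem (x * inv' x) := by
  show x * inv' x * (x * inv' x) = x * inv' x
  calc x * inv' x * (x * inv' x) = (x * inv' x * x) * inv' x := by simp only [mul_assoc]
    _ = x * inv' x := by rw [InvMonZero.mul_inv_mul]

lemma nle_refl (x : S) : nle x x := (InvMonZero.mul_inv_mul x).symm

lemma nle_zero (x : S) : nle (0 : S) x := by
  show (0 : S) = x * inv' (0 : S) * 0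
  rw [mul_zero]

end Helpers

section BoolHelpers

variable {S : Type*} [BooleanInverseMonoid S]

lemma absorb {p q q' : S} (hp : IsIdem p) (hq : IsIdem q) (hj : IsJoin q q' 1)
    (h0 : p * q' = 0) : p = p * q := by
  have hp' : p * p = p := hp
  have hJ : IsJoin (p * q) (p * q') (p * 1) := BooleanInverseMonoid.mul_join_left q q' 1 p hj
  rw [mul_one, h0] at hJ
  have h3 := hJ.2.2 (p * q) (nle_refl _) (nle_zero _)
  unfold nle at h3
  rw [invIdem19 hp] at h3
  have h4 : p = p * q * p := by
    calc p = p * q * p * p := h3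
      _ = p * q * (p * p) := by rw [mul_assoc]
      _ = p * q * p := by rw [hp']
  calc p = p * q * p := h4
    _ = p * (q * p) := by rw [mul_assoc]
    _ = p * (p * q) := by rw [comm_idem hq hp]
    _ = p * p * q := by rw [← mul_assoc]
    _ = p * q := by rw [hp']

end BoolHelpers

section MainStep

variable {S : Type*} [InvMonZero S]

lemma infinitesimal_step {a e₀ : S} (h1 : IsIdem e₀) (h2 : e₀ * (inv' a * a) = e₀)
    (h3 : e₀ ≠ 0) (h4 : e₀ * (a * e₀ * inv' a) = 0) :
    ∃ b : S, Infinitesimal b ∧ nle b a := by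
  have h1' : e₀ * e₀ = e₀ := h1
  set ai := inv' a with hai
  have hA : (a * e₀) * (e₀ * ai) * (a * e₀) = a * e₀ := by
    calc (a * e₀) * (e₀ * ai) * (a * e₀) = a * (e₀ * e₀) * ai * a * e₀ := by
          simp only [mul_assoc]
      _ = a * e₀ * ai * a * e₀ := by rw [h1']
      _ = a * (e₀ * (ai * a)) * e₀ := by simp only [mul_assoc]
      _ = a * e₀ * e₀ := by rw [h2]
      _ = a * (e₀ * e₀) := by rw [mul_assoc]
      _ = a * e₀ := by rw [h1']
  have hB : (e₀ * ai) * (a * e₀) * (e₀ * ai) = e₀ * ai := by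
    calc (e₀ * ai) * (a * e₀) * (e₀ * ai) = e₀ * (ai * a) * (e₀ * e₀) * ai := by
          simp only [mul_assoc]
      _ = e₀ * (ai * a) * e₀ * ai := by rw [h1']
      _ = e₀ * e₀ * ai := by rw [h2]
      _ = e₀ * ai := by rw [h1']
  have hinv : inv' (a * e₀) = e₀ * ai := invUnique19 hA hB
  have bb : e₀ * ai * (a * e₀) = e₀ := by
    calc e₀ * ai * (a * e₀) = e₀ * (ai * a) * e₀ := by simp only [mul_assoc]
      _ = e₀ * e₀ := by rw [h2]
      _ = e₀ := h1'
  have hne : a * e₀ ≠ 0 := by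
    intro h0
    apply h3
    calc e₀ = e₀ * ai * (a * e₀) := bb.symm
      _ = e₀ * ai * 0 := by rw [h0]
      _ = 0 := mul_zero _
  have hmid : e₀ * a * e₀ = 0 := by
    calc e₀ * a * e₀ = e₀ * a * (e₀ * (ai * a)) := by rw [h2]
      _ = e₀ * (a * e₀ * ai) * a := by simp only [mul_assoc]
      _ = 0 * a := by rw [h4]
      _ = 0 := zero_mul a
  have hsq : (a * e₀) * (a * e₀) = 0 := by
    calc (a * e₀) * (a * e₀) = a * (e₀ * a * e₀) := by simp only [mul_assoc]
      _ = a * 0 := by rw [hmid]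
      _ = 0 := mul_zero a
  have hle : nle (a * e₀) a := by
    show a * e₀ = a * inv' (a * e₀) * (a * e₀)
    rw [hinv]
    calc a * e₀ = a * (e₀ * e₀) := by rw [h1']
      _ = a * (e₀ * (ai * a) * e₀) := by rw [h2]
      _ = a * (e₀ * ai) * (a * e₀) := by simp only [mul_assoc]
  exact ⟨a * e₀, ⟨hne, hsq⟩, hle⟩

end MainStep

/-- a Boolean inverse monoid is fundamental iff every
non-idempotent element lies above an infinitesimal in the natural partial order. -/
theorem stmt_19 (S : Type*) [BooleanInverseMonoid S] :
    Fundamental S ↔ ∀ a : S, ¬ IsIdem a → ∃ b : S, Infinitesimal b ∧ nle b a := by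
  constructor
  · -- hard direction
    intro hFund a ha
    set ai := inv' a with hai
    have hd : IsIdem (ai * a) := isIdem_dom a
    have hr : IsIdem (a * ai) := isIdem_ran a
    have haia : a * ai * a = a := InvMonZero.mul_inv_mul a
    have hiai : ai * a * ai = ai := InvMonZero.inv_mul_inv a
    have hada : a * (ai * a) = a := by rw [← mul_assoc]; exact haia
    -- Step 1: find an idempotent e ≤ a⁻¹a not fixed by conjugation
    have step1 : ∃ e : S, IsIdem e ∧ e * (ai * a) = e ∧ a * e * ai ≠ e := by
      by_contra hno
      push_neg at hno
      have hrd : a * ai = ai * a := by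
        have h := hno (ai * a) hd hd
        calc a * ai = a * (ai * a) * ai := by rw [hada]
          _ = ai * a := h
      have hda : ai * a * a = a := by rw [← hrd]; exact haia
      refine absurd (hFund a ?_) ha
      intro f hf
      have hdf : IsIdem (ai * a * f) := isIdem_mul hd hf
      have hdfd : ai * a * f * (ai * a) = ai * a * f := by
        calc ai * a * f * (ai * a) = ai * a * (f * (ai * a)) := by rw [mul_assoc]
          _ = ai * a * ((ai * a) * f) := by rw [comm_idem hf hd]
          _ = ai * a * (ai * a) * f := by rw [← mul_assoc]
          _ = ai * a * f := by rw [hd]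
      have key := hno (ai * a * f) hdf hdfd
      have key2 : a * (ai * a * f) * ai * a = ai * a * f * a := by rw [key]
      have hLHS : a * (ai * a * f) * ai * a = a * f := by
        calc a * (ai * a * f) * ai * a = a * (ai * a * f * (ai * a)) := by
              simp only [mul_assoc]
          _ = a * (ai * a * f) := by rw [hdfd]
          _ = a * (ai * a) * f := by rw [← mul_assoc]
          _ = a * f := by rw [hada]
      have hRHS : ai * a * f * a = f * a := by
        calc ai * a * f * a = f * (ai * a) * a := by rw [comm_idem hd hf]
          _ = f * (ai * a * a) := by simp only [mul_assoc]
          _ = f * a := by rw [hda]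
      rw [hLHS, hRHS] at key2
      exact key2
    obtain ⟨e, he, hed, hne⟩ := step1
    have hee : e * e = e := he
    obtain ⟨f, hfdef⟩ : ∃ f : S, f = a * e * ai := ⟨_, rfl⟩
    have conj : ∀ x y : S, x * (ai * a) = x → (a * x * ai) * (a * y * ai) = a * (x * y) * ai := by
      intro x y hx
      calc (a * x * ai) * (a * y * ai) = a * (x * (ai * a)) * (y * ai) := by
            simp only [mul_assoc]
        _ = a * x * (y * ai) := by rw [hx, ← mul_assoc]
        _ = a * (x * y) * ai := by simp only [mul_assoc]
    have hff : f * f = f := by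
      rw [hfdef, conj e e hed, hee]
    have hfidem : IsIdem f := hff
    have hrf : a * ai * f = f := by
      rw [hfdef]
      calc a * ai * (a * e * ai) = a * ai * a * (e * ai) := by simp only [mul_assoc]
        _ = a * (e * ai) := by rw [haia]
        _ = a * e * ai := by rw [← mul_assoc]
    have hfr : f * (a * ai) = f := by
      rw [hfdef]
      calc a * e * ai * (a * ai) = a * (e * (ai * a)) * ai := by simp only [mul_assoc]
        _ = a * e * ai := by rw [hed]
    have hfa : f * a = a * e := by
      rw [hfdef]
      calc a * e * ai * a = a * (e * (ai * a)) := by simp only [mul_assoc]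
        _ = a * e := by rw [hed]
    have hne' : f ≠ e := by rw [hfdef]; exact hne
    obtain ⟨f', hf', hff', hjf⟩ := BooleanInverseMonoid.compl_exists f hfidem
    by_cases hc : e * f' = 0
    · -- Case B : e ≤ f, use complement of e
      have hef : e = e * f := absorb he hfidem hjf hc
      obtain ⟨e', hei', hee', hje⟩ := BooleanInverseMonoid.compl_exists e he
      have hk0 : f * e' ≠ 0 := by
        intro h0
        have hfe : f = f * e := absorb hfidem he hje h0
        apply hne'
        calc f = f * e := hfe
          _ = e * f := comm_idem hfidem he
          _ = e := hef.symm
      obtain ⟨k, hkdef⟩ : ∃ k : S, k = f * e' := ⟨_, rfl⟩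
      have hkidem : IsIdem k := by rw [hkdef]; exact isIdem_mul hfidem hei'
      have hkk : k * k = k := hkidem
      have hfk : f * k = k := by
        rw [hkdef, ← mul_assoc, hff]
      have hkf : k * f = k := by
        rw [hkdef]
        calc f * e' * f = f * (f * e') := by
              rw [mul_assoc, comm_idem hei' hfidem]
          _ = f * f * e' := by rw [← mul_assoc]
          _ = f * e' := by rw [hff]
      have hkr : k * (a * ai) = k := by
        calc k * (a * ai) = k * f * (a * ai) := by rw [hkf]
          _ = k * (f * (a * ai)) := by rw [mul_assoc]
          _ = k * f := by rw [hfr]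
          _ = k := hkf
      have hrk : a * ai * k = k := by
        calc a * ai * k = a * ai * f * e' := by rw [hkdef, ← mul_assoc]
          _ = f * e' := by rw [hrf]
          _ = k := hkdef.symm
      obtain ⟨e₀, h0def⟩ : ∃ x : S, x = ai * k * a := ⟨_, rfl⟩
      have h0idem : IsIdem e₀ := by
        show e₀ * e₀ = e₀
        rw [h0def]
        calc (ai * k * a) * (ai * k * a) = ai * (k * (a * ai) * k) * a := by
              simp only [mul_assoc]
          _ = ai * (k * k) * a := by rw [hkr]
          _ = ai * k * a := by rw [hkk]
      have h0d : e₀ * (ai * a) = e₀ := by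
        rw [h0def]
        calc ai * k * a * (ai * a) = ai * k * (a * ai * a) := by simp only [mul_assoc]
          _ = ai * k * a := by rw [haia]
      have hconjback : a * e₀ * ai = k := by
        rw [h0def]
        calc a * (ai * k * a) * ai = a * ai * k * (a * ai) := by simp only [mul_assoc]
          _ = k * (a * ai) := by rw [hrk]
          _ = k := hkr
      have h0ne : e₀ ≠ 0 := by
        intro h0
        have hk : k = 0 := by
          rw [← hconjback, h0, mul_zero, zero_mul]
        rw [hkdef] at hk
        exact hk0 hk
      have h0e : e₀ * e = e₀ := by
        rw [h0def]
        calc ai * k * a * e = ai * (k * (f * a)) := by rw [hfa]; simp only [mul_assoc]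
          _ = ai * (k * f) * a := by simp only [mul_assoc]
          _ = ai * k * a := by rw [hkf]
      have hek : e * k = 0 := by
        rw [hkdef]
        calc e * (f * e') = e * f * e' := by rw [← mul_assoc]
          _ = e * e' := by rw [← hef]
          _ = 0 := hee'
      have h0k : e₀ * (a * e₀ * ai) = 0 := by
        rw [hconjback]
        calc e₀ * k = e₀ * e * k := by rw [h0e]
          _ = e₀ * (e * k) := by rw [mul_assoc]
          _ = e₀ * 0 := by rw [hek]
          _ = 0 := mul_zero _
      exact infinitesimal_step h0idem h0d h0ne h0k
    · -- Case A : e₀ = e * f' works directly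
      have h0idem : IsIdem (e * f') := isIdem_mul he hf'
      have h0d : (e * f') * (ai * a) = e * f' := by
        calc e * f' * (ai * a) = e * (f' * (ai * a)) := by rw [mul_assoc]
          _ = e * ((ai * a) * f') := by rw [comm_idem hf' hd]
          _ = e * (ai * a) * f' := by rw [← mul_assoc]
          _ = e * f' := by rw [hed]
      obtain ⟨g, hgdef⟩ : ∃ g : S, g = a * (e * f') * ai := ⟨_, rfl⟩
      have hgidem : IsIdem g := by
        show g * g = g
        rw [hgdef, conj (e * f') (e * f') h0d]
        have : (e * f') * (e * f') = e * f' := h0idem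
        rw [this]
      have hgf : g * f = g := by
        rw [hgdef, hfdef, conj (e * f') e h0d]
        have : e * f' * e = e * f' := by
          calc e * f' * e = e * (e * f') := by rw [mul_assoc, comm_idem hf' he]
            _ = e * e * f' := by rw [← mul_assoc]
            _ = e * f' := by rw [hee]
        rw [this]
      have h0k : (e * f') * (a * (e * f') * ai) = 0 := by
        rw [← hgdef]
        calc e * f' * g = e * (f' * g) := by rw [mul_assoc]
          _ = e * (g * f') := by rw [comm_idem hf' hgidem]
          _ = e * (g * f * f') := by rw [hgf]
          _ = e * (g * (f * f')) := by rw [mul_assoc]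
          _ = e * (g * 0) := by rw [hff']
          _ = 0 := by rw [mul_zero, mul_zero]
      exact infinitesimal_step h0idem h0d hc h0k
  · -- easy direction
    intro H a hcomm
    by_contra hna
    obtain ⟨b, hbInf, hba⟩ := H a hna
    obtain ⟨hb0, hb2⟩ := hbInf
    have he : IsIdem (inv' b * b) := isIdem_dom b
    have hg : IsIdem (b * inv' b) := isIdem_ran b
    have hbae : b = a * (inv' b * b) := by rw [← mul_assoc]; exact hba
    have hcomm2 : a * (inv' b * b) * (b * inv' b) = (b * inv' b) * (a * (inv' b * b)) := by
      have h2 := hcomm (b * inv' b) hg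
      have h3 := comm_idem he hg
      calc a * (inv' b * b) * (b * inv' b)
          = a * ((inv' b * b) * (b * inv' b)) := by rw [mul_assoc]
        _ = a * ((b * inv' b) * (inv' b * b)) := by rw [h3]
        _ = a * (b * inv' b) * (inv' b * b) := by rw [← mul_assoc]
        _ = (b * inv' b) * a * (inv' b * b) := by rw [h2]
        _ = (b * inv' b) * (a * (inv' b * b)) := by rw [mul_assoc]
    rw [← hbae] at hcomm2
    have : b = 0 := by
      calc b = b * inv' b * b := (InvMonZero.mul_inv_mul b).symm
        _ = b * (b * inv' b) := hcomm2.symm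
        _ = b * b * inv' b := by rw [← mul_assoc]
        _ = 0 * inv' b := by rw [hb2]
        _ = 0 := zero_mul _
    exact hb0 this
end
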